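/- arXiv:2605.20109 — 6 statements merged into one kernel-verified Lean document; each statement's English description precedes it below -/
import Mathlib

section
/- Let K = F_{q^{2m}} with Hermitian involution σ(x) = x^{q^m}. Let B ∈ K^{k×k} be a Hermitian matrix (B† = B) whose kernel has K-dimension h ≥ 1. Let a ∈ K^{k×1} and λ ∈ F_q with λ ≠ 0. If there exists z ∈ ker(B) with z†a ≠ 0, then the kernel of B + λ a a† has K-dimension h − 1. -/
open Matrix

/-!
For `x` in the kernel of `B + λ a a†`, applying `z†` kills `B x`, because hermiticity gives
`z† B = (B z)† = 0`; what remains is `λ (a† x) (z† a) = 0`, so `a† x = 0` and then `B x = 0`.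
Hence the kernel is `ker B ∩ ker (a† ·)`, and the functional `a† ·` is nonzero on `ker B`
(its value at `z` is `σ (z† a) ≠ 0`, as `σ` is an involution), so it cuts the dimension by one.
-/

theorem Submodule.finrank_inf_ker_add_one {K V : Type*} [Field K] [AddCommGroup V] [Module K V]
    (S : Submodule K V) [FiniteDimensional K S] (f : Module.Dual K V) {z : V} (hzS : z ∈ S)
    (hz : f z ≠ 0) :
    Module.finrank K ↥(S ⊓ LinearMap.ker f) + 1 = Module.finrank K S := by
  have hf : f.domRestrict S ≠ 0 := fun h => hz (by simpa using LinearMap.congr_fun h ⟨z, hzS⟩)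
  rw [← Module.Dual.finrank_ker_add_one_of_ne_zero hf, LinearMap.ker_domRestrict,
    ← Submodule.finrank_map_subtype_eq, Submodule.map_comap_subtype]

namespace Matrix

variable {n R : Type*} [Fintype n]

theorem ker_mulVecLin_add_vecMulVec [CommRing R] [IsDomain R] (B : Matrix n n R) (a b w : n → R)
    (hwB : w ᵥ* B = 0) (hwa : w ⬝ᵥ a ≠ 0) :
    LinearMap.ker (B + vecMulVec a b).mulVecLin =
      LinearMap.ker B.mulVecLin ⊓ LinearMap.ker (dotProductBilin R R b) := by
  have hmul : ∀ x, (B + vecMulVec a b) *ᵥ x = B *ᵥ x + (b ⬝ᵥ x) • a := fun x => by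
    rw [add_mulVec, vecMulVec_mulVec, op_smul_eq_smul]
  ext x
  simp only [LinearMap.mem_ker, Submodule.mem_inf, mulVecLin_apply, dotProductBilin_apply_apply,
    hmul]
  constructor
  · intro hx
    have hbx : b ⬝ᵥ x = 0 := by
      simpa [dotProduct_add, dotProduct_mulVec, hwB, hwa] using congrArg (w ⬝ᵥ ·) hx
    simpa [hbx] using hx
  · rintro ⟨hBx, hbx⟩
    simp [hBx, hbx]

theorem vecMul_comp_eq_zero_of_mulVec_eq_zero [CommSemiring R] (σ : R →+* R) {B : Matrix n n R}
    (hB : (B.map σ)ᵀ = B) {z : n → R} (hz : B *ᵥ z = 0) : (σ ∘ z) ᵥ* B = 0 := by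
  ext i
  rw [← hB, vecMul_transpose, ← RingHom.map_mulVec, hz]
  simp

end Matrix

namespace FiniteField

variable {K : Type*} [Field K] [Fintype K]

theorem charP_of_card_eq_prime_pow {p N : ℕ} (hp : p.Prime) (hN : N ≠ 0)
    (hK : Fintype.card K = p ^ N) : CharP K p := by
  obtain ⟨p', hchar, n, hp', hcard⟩ := FiniteField.card' K
  obtain ⟨rfl, -⟩ := hp.pow_inj' hp' hN n.ne_zero (hK.symm.trans hcard)
  exact hchar

theorem iterateFrobenius_iterateFrobenius_of_card_eq_sq {p n : ℕ} [ExpChar K p]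
    (hK : Fintype.card K = (p ^ n) ^ 2) (x : K) :
    iterateFrobenius K p n (iterateFrobenius K p n x) = x := by
  rw [iterateFrobenius_def, iterateFrobenius_def, ← pow_mul, ← sq, ← hK, FiniteField.pow_card]

end FiniteField

theorem stmt1_general (q m k h : ℕ) (hq : ∃ p r : ℕ, p.Prime ∧ 0 < r ∧ q = p ^ r) (hm : 1 ≤ m)
    (K : Type*) [Field K] [Fintype K] (hK : Fintype.card K = q ^ (2 * m))
    (B : Matrix (Fin k) (Fin k) K) (hHerm : (B.map fun x => x ^ q ^ m)ᵀ = B)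
    (hker : Module.finrank K (LinearMap.ker B.mulVecLin) = h)
    (a : Fin k → K) (l : K) (hl0 : l ≠ 0)
    (hz : ∃ z : Fin k → K, B.mulVec z = 0 ∧ ∑ i, (z i ^ q ^ m) * a i ≠ 0) :
    Module.finrank K
      (LinearMap.ker (B + l • Matrix.vecMulVec a (fun j => a j ^ q ^ m)).mulVecLin) = h - 1 := by
  obtain ⟨p, r, hp, hr, rfl⟩ := hq
  have hKsq : Fintype.card K = (p ^ (r * m)) ^ 2 := by rw [hK]; ring
  have : CharP K p :=
    FiniteField.charP_of_card_eq_prime_pow hp (by positivity) (hKsq.trans (pow_mul _ _ _).symm)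
  have : ExpChar K p := ExpChar.prime hp
  set σ := iterateFrobenius K p (r * m)
  have hσ : ∀ x : K, x ^ (p ^ r) ^ m = σ x := fun x => by rw [iterateFrobenius_def, pow_mul]
  simp only [hσ] at hHerm hz
  rw [show (fun j => a j ^ (p ^ r) ^ m) = σ ∘ a from funext fun j => hσ (a j)]
  obtain ⟨z, hzB, hza⟩ := hz
  have hσσ : ∀ x, σ (σ x) = x := FiniteField.iterateFrobenius_iterateFrobenius_of_card_eq_sq hKsq
  have hzB_vecMul : (σ ∘ z) ᵥ* B = 0 := vecMul_comp_eq_zero_of_mulVec_eq_zero σ hHerm hzB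
  have hza_smul : (σ ∘ z) ⬝ᵥ (l • a) ≠ 0 := by
    rw [dotProduct_smul]
    exact smul_ne_zero hl0 hza
  have hzb : (σ ∘ a) ⬝ᵥ z ≠ 0 := fun h0 => hza <| by
    simpa [RingHom.map_dotProduct, dotProduct, hσσ, mul_comm] using congrArg σ h0
  have hdim := Submodule.finrank_inf_ker_add_one (LinearMap.ker B.mulVecLin)
    (dotProductBilin K K (σ ∘ a)) (by simpa using hzB) hzb
  rw [← smul_vecMulVec, ker_mulVecLin_add_vecMulVec B _ _ _ hzB_vecMul hza_smul]
  omega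

/-- adding a rank-one Hermitian perturbation `λ a a†` to a Hermitian matrix `B`
with `z†a ≠ 0` for some `z ∈ ker B` drops the kernel dimension by one. -/
theorem stmt1 (q m k h : ℕ) (hq : ∃ p r : ℕ, p.Prime ∧ 0 < r ∧ q = p ^ r) (hm : 1 ≤ m)
    (K : Type*) [Field K] [Fintype K] (hK : Fintype.card K = q ^ (2 * m))
    (B : Matrix (Fin k) (Fin k) K) (hHerm : (B.map fun x => x ^ q ^ m)ᵀ = B)
    (hker : Module.finrank K (LinearMap.ker B.mulVecLin) = h) (hh : 1 ≤ h)
    (a : Fin k → K) (l : K) (hl0 : l ≠ 0) (hlFq : l ^ q = l)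
    (hz : ∃ z : Fin k → K, B.mulVec z = 0 ∧ ∑ i, (z i ^ q ^ m) * a i ≠ 0) :
    Module.finrank K
      (LinearMap.ker (B + l • Matrix.vecMulVec a (fun j => a j ^ q ^ m)).mulVecLin) = h - 1 :=
  stmt1_general q m k h hq hm K hK B hHerm hker a l hl0 hz
end

section
/- Let q = 3 and n ≥ 3. Let K be any field extension of F_3 and w ∈ K^n nonzero. Then there exist u ∈ F_3^n and M ∈ GL_n(F_3) such that w u^⊤ ≠ 0 and M M^⊤ = I_n + u^⊤ u. -/
/-!
For `V = uᵀu` with `u·u = 0` we have `V² = 0`, so in characteristic 3 the symmetric matrix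
`M = 1 + 2V` is invertible (inverse `1 + V`) and `M Mᵀ = M² = 1 + 4V = 1 + V`. It remains to find
such an isotropic `u` pairing nontrivially with `w`: take `u = ±eᵢ + eⱼ + eₗ` with `wᵢ ≠ 0`, whose
square is `1 + 1 + 1 = 0`, choosing the sign so that `±wᵢ + wⱼ + wₗ ≠ 0`; one sign works since the
two values differ by `2wᵢ ≠ 0`.
-/

open Matrix

section SquareZero

variable {R : Type*} [Ring R] {x : R}

theorem isUnit_one_add_two_mul_of_mul_self_eq_zero (hx : x * x = 0) : IsUnit (1 + 2 * x) :=
  ((Commute.ofNat_left 2 x).isNilpotent_mul_left ⟨2, by rw [sq, hx]⟩).isUnit_one_add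

theorem one_add_two_mul_mul_self_of_mul_self_eq_zero (h3 : (3 : R) = 0) (hx : x * x = 0) :
    (1 + 2 * x) * (1 + 2 * x) = 1 + x :=
  calc (1 + 2 * x) * (1 + 2 * x) = 1 + x + 3 * x + 4 * (x * x) := by noncomm_ring
    _ = 1 + x := by rw [h3, hx]; simp

end SquareZero

section Isotropic

variable {ι R : Type*} [Fintype ι] [CommRing R]

theorem vecMulVec_mul_self_eq_zero {u : ι → R} (hu : u ⬝ᵥ u = 0) :
    vecMulVec u u * vecMulVec u u = 0 := by
  rw [vecMulVec_mul_vecMulVec, hu, zero_smul]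
  ext
  simp [vecMulVec_apply]

variable [DecidableEq ι]

theorem Matrix.ofNat_three_eq_zero (h3 : (3 : R) = 0) : (3 : Matrix ι ι R) = 0 := by
  rw [← map_ofNat (scalar ι), h3, map_zero]

theorem one_add_two_mul_vecMulVec_mul_transpose (h3 : (3 : R) = 0) {u : ι → R}
    (hu : u ⬝ᵥ u = 0) :
    (1 + 2 * vecMulVec u u) * (1 + 2 * vecMulVec u u)ᵀ = 1 + vecMulVec u u := by
  rw [transpose_add, transpose_mul, transpose_one, transpose_ofNat, transpose_vecMulVec,
    ← (Commute.ofNat_left 2 _).eq]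
  exact one_add_two_mul_mul_self_of_mul_self_eq_zero (Matrix.ofNat_three_eq_zero h3)
    (vecMulVec_mul_self_eq_zero hu)

theorem dotProduct_self_single_add_single_add_single (h3 : (3 : R) = 0) {i j l : ι}
    (hij : i ≠ j) (hil : i ≠ l) (hjl : j ≠ l) {c : R} (hc : c * c = 1) :
    (Pi.single i c + Pi.single j 1 + Pi.single l 1 : ι → R) ⬝ᵥ
      (Pi.single i c + Pi.single j 1 + Pi.single l 1) = 0 := by
  simp [dotProduct_add, hij, hil, hjl, hij.symm, hil.symm, hjl.symm, hc]
  linear_combination h3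

end Isotropic

theorem dotProduct_map_single_add_single_add_single {ι R S : Type*} [Fintype ι] [DecidableEq ι]
    [Semiring R] [Semiring S] (f : R →+* S) (w : ι → S) (i j l : ι) (c : R) :
    w ⬝ᵥ (fun k => f ((Pi.single i c + Pi.single j 1 + Pi.single l 1 : ι → R) k)) =
      w i * f c + w j + w l := by
  simp [dotProduct, mul_add, Finset.sum_add_distrib, Pi.single_apply, apply_ite f]

theorem exists_ne_and_ne_of_three_le_card {ι : Type*} [Fintype ι] (hι : 3 ≤ Fintype.card ι)
    (i : ι) : ∃ j l, i ≠ j ∧ i ≠ l ∧ j ≠ l := by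
  classical
  have : 1 < (Finset.univ.erase i).card := by
    rw [Finset.card_erase_of_mem (Finset.mem_univ i), Finset.card_univ]
    omega
  obtain ⟨j, hj, l, hl, hjl⟩ := Finset.one_lt_card.mp this
  exact ⟨j, l, (Finset.ne_of_mem_erase hj).symm, (Finset.ne_of_mem_erase hl).symm, hjl⟩

theorem add_ne_zero_or_neg_add_ne_zero {K : Type*} [Field K] (h2 : (2 : K) ≠ 0) {a : K}
    (ha : a ≠ 0) (b : K) : a + b ≠ 0 ∨ -a + b ≠ 0 := by
  by_contra! h
  exact mul_ne_zero h2 ha (by linear_combination h.1 - h.2)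

theorem exists_dotProduct_self_eq_zero_and_dotProduct_ne_zero {ι K : Type*} [Fintype ι]
    [DecidableEq ι] (hι : 3 ≤ Fintype.card ι) [Field K] [Algebra (ZMod 3) K] {w : ι → K}
    (hw : w ≠ 0) :
    ∃ u : ι → ZMod 3, u ⬝ᵥ u = 0 ∧ w ⬝ᵥ (fun k => algebraMap (ZMod 3) K (u k)) ≠ 0 := by
  obtain ⟨i, hi⟩ := Function.ne_iff.mp hw
  obtain ⟨j, l, hij, hil, hjl⟩ := exists_ne_and_ne_of_three_le_card hι i
  have h2 : (2 : K) ≠ 0 := by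
    have := charP_of_injective_algebraMap' (ZMod 3) (A := K) 3
    exact_mod_cast (CharP.cast_eq_zero_iff K 3 2).not.mpr (by norm_num)
  have isotropic (c : ZMod 3) (hc : c * c = 1) :=
    dotProduct_self_single_add_single_add_single (by decide) hij hil hjl hc
  have pairing := dotProduct_map_single_add_single_add_single (algebraMap (ZMod 3) K) w i j l
  rcases add_ne_zero_or_neg_add_ne_zero h2 hi (w j + w l) with h | h
  · exact ⟨_, isotropic 1 (by decide), by rw [pairing]; simpa [add_assoc] using h⟩
  · exact ⟨_, isotropic (-1) (by decide), by rw [pairing]; simpa [add_assoc] using h⟩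

/-- for `q = 3` and `n ≥ 3`, any nonzero `w ∈ K^n` admits `u ∈ F_3^n` and
`M ∈ GL_n(F_3)` with `w u^⊤ ≠ 0` and `M M^⊤ = I + u^⊤ u`. -/
theorem stmt3 (n : ℕ) (hn : 3 ≤ n)
    (K : Type*) [Field K] [Algebra (ZMod 3) K]
    (w : Fin n → K) (hw : w ≠ 0) :
    ∃ (u : Fin n → ZMod 3) (M : Matrix (Fin n) (Fin n) (ZMod 3)),
      IsUnit M ∧ (∑ i, w i * algebraMap (ZMod 3) K (u i)) ≠ 0 ∧
      M * Mᵀ = 1 + Matrix.vecMulVec u u := by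
  obtain ⟨u, hu, hwu⟩ :=
    exists_dotProduct_self_eq_zero_and_dotProduct_ne_zero (by simpa using hn) hw
  exact ⟨u, 1 + 2 * vecMulVec u u,
    isUnit_one_add_two_mul_of_mul_self_eq_zero (vecMulVec_mul_self_eq_zero hu), hwu,
    one_add_two_mul_vecMulVec_mul_transpose (by decide) hu⟩
end

section
/- Let q = 2 and n ≥ 3. Let K be a field extension of F_2 and let w ∈ K^n be a vector that is not a K-scalar multiple of the all-ones vector (1,…,1). Then there exist u ∈ F_2^n and M ∈ GL_n(F_2) such that w u^⊤ ≠ 0 and M M^⊤ = I_n + u^⊤ u. -/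
/-!
Pick coordinates `i ≠ j` with `w i ≠ w j` and put `u = e_i + e_j`, so that `w u^⊤ = w i + w j ≠ 0`
in characteristic two. For a third coordinate `k`, the matrix
`M = 1 + E_ki + E_kj + E_ij + E_jk` (the paper's `L` on the coordinates `(k, i, j)`) satisfies
`M Mᵀ = 1 + u^⊤ u`, the cross terms cancelling in pairs. Invertibility of `M` is then automatic:
`det(M)² = det(1 + u^⊤ u) = 1 + u ⬝ u = 1`.
-/

open Matrix

section

variable {ι R : Type*} [Fintype ι] [DecidableEq ι] [CommRing R]

theorem Matrix.isUnit_of_mul_transpose_eq_one_add_vecMulVec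
    {M : Matrix ι ι R} {u : ι → R} (hM : M * Mᵀ = 1 + vecMulVec u u) (hu : u ⬝ᵥ u = 0) :
    IsUnit M := by
  have hdet : M.det * M.det = 1 := by
    nth_rw 2 [← det_transpose]
    rw [← det_mul, hM, vecMulVec_eq Unit, det_one_add_replicateCol_mul_replicateRow, hu,
      add_zero]
  exact (isUnit_iff_isUnit_det M).mpr (.of_mul_eq_one _ hdet)

omit [Fintype ι] in
def cycleMatrix (i j k : ι) : Matrix ι ι R :=
  1 + (single k i 1 + single k j 1 + single i j 1 + single j k 1)

variable [CharP R 2]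

theorem dotProduct_single_add_single_self {i j : ι} (hij : i ≠ j) :
    (Pi.single i 1 + Pi.single j 1 : ι → R) ⬝ᵥ (Pi.single i 1 + Pi.single j 1) = 0 := by
  simp [dotProduct_add, hij, hij.symm, CharTwo.add_self_eq_zero]

theorem cycleMatrix_mul_transpose {i j k : ι} (hij : i ≠ j) (hki : k ≠ i) (hkj : k ≠ j) :
    cycleMatrix i j k * (cycleMatrix i j k)ᵀ =
      (1 + vecMulVec (Pi.single i 1 + Pi.single j 1) (Pi.single i 1 + Pi.single j 1) :
        Matrix ι ι R) := by
  simp only [cycleMatrix, add_vecMulVec, vecMulVec_add, ← single_eq_single_vecMulVec_single,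
    transpose_add, transpose_one, transpose_single, mul_add, add_mul, one_mul, mul_one,
    single_mul_single_same, single_mul_single_of_ne, hij, hij.symm, hki, hki.symm, hkj, hkj.symm,
    Ne, not_false_iff]
  abel_nf
  simp only [two_zsmul, ← single_add, CharTwo.add_self_eq_zero, single_zero, zero_add]

end

/-- for `q = 2` and `n ≥ 3`, any `w ∈ K^n` which is not a `K`-multiple of the
all-ones vector admits `u ∈ F_2^n` and `M ∈ GL_n(F_2)` with `w u^⊤ ≠ 0` and
`M M^⊤ = I + u^⊤ u`. -/
theorem stmt4 (n : ℕ) (hn : 3 ≤ n)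
    (K : Type*) [Field K] [Algebra (ZMod 2) K]
    (w : Fin n → K) (hw : ∀ c : K, w ≠ fun _ => c) :
    ∃ (u : Fin n → ZMod 2) (M : Matrix (Fin n) (Fin n) (ZMod 2)),
      IsUnit M ∧ (∑ i, w i * algebraMap (ZMod 2) K (u i)) ≠ 0 ∧
      M * Mᵀ = 1 + Matrix.vecMulVec u u := by
  have : CharP K 2 := charP_of_injective_algebraMap (algebraMap (ZMod 2) K).injective 2
  obtain ⟨i, j, hwij⟩ : ∃ i j, w i ≠ w j := by
    by_contra! hconst
    exact hw (w ⟨0, by omega⟩) (funext fun b => hconst b _)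
  have hij : i ≠ j := fun h => hwij (congrArg w h)
  obtain ⟨k, hki, hkj⟩ := Fin.exists_ne_and_ne_of_two_lt i j (by omega)
  have hM := cycleMatrix_mul_transpose (R := ZMod 2) hij hki hkj
  refine ⟨_, _, isUnit_of_mul_transpose_eq_one_add_vecMulVec hM
    (dotProduct_single_add_single_self hij), ?_, hM⟩
  have hsum : ∑ b, w b * algebraMap (ZMod 2) K
      ((Pi.single i 1 + Pi.single j 1 : Fin n → ZMod 2) b) = w i + w j := by
    simp [mul_add, Finset.sum_add_distrib, Pi.single_apply]
  rw [hsum, Ne, CharTwo.add_eq_zero]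
  exact hwij
end

section
/- Let K = F_{9^m} with Hermitian involution σ(x) = x^{3^m}, and let C ⊆ K² be a 1-dimensional K-linear subspace with dim_K (C ∩ C^{⊥_H}) = 1 (i.e. C is Hermitian self-orthogonal). Then there exists M ∈ GL_2(F_3) such that the code C·M = {cM : c ∈ C} satisfies C·M ∩ (C·M)^{⊥_H} = {0}. -/
/-!
Write `C = K ∙ (x, y)` and `q = 3 ^ m`. Self-orthogonality says `x ^ q * x + y ^ q * y = 0`,
which forces `y ≠ 0`. The shear `!![1, 0; t, 1]` with `t ∈ 𝔽₃` sends `(x, y)` to `(x + t y, y)`,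
whose Hermitian norm is `t (x ^ q y + x y ^ q) + t² y ^ q y`, since Frobenius is additive and
fixes `t`. For `t = 1` and `t = -1` the two values add up to `2 y ^ q y ≠ 0`, so one of them is
nonzero, and a line spanned by a vector of nonzero norm meets its Hermitian dual trivially.
-/

open Matrix

/-- Hermitian (σ-twisted) dual of a code `C ⊆ K^n`, where σ = (x ↦ x^e). -/
noncomputable def hermDual {K : Type*} [Field K] (n e : ℕ) (C : Submodule K (Fin n → K)) :
    Submodule K (Fin n → K) :=
  ⨅ c ∈ C, LinearMap.ker (∑ i : Fin n, (c i ^ e) • (LinearMap.proj i : (Fin n → K) →ₗ[K] K))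

section HermitianHull

variable {K : Type*} [Field K] {n e : ℕ}

lemma mem_hermDual {C : Submodule K (Fin n → K)} {x : Fin n → K} :
    x ∈ hermDual n e C ↔ ∀ c ∈ C, ∑ i, c i ^ e * x i = 0 := by
  simp [hermDual, Submodule.mem_iInf, LinearMap.sum_apply, smul_eq_mul]

lemma le_hermDual_of_finrank_inf_hermDual {C : Submodule K (Fin n → K)}
    (h : Module.finrank K ↥(C ⊓ hermDual n e C) = Module.finrank K C) :
    C ≤ hermDual n e C :=
  inf_eq_left.mp (Submodule.eq_of_le_of_finrank_eq inf_le_left h)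

lemma span_singleton_inf_hermDual_eq_bot {w : Fin n → K} (hw : ∑ i, w i ^ e * w i ≠ 0) :
    K ∙ w ⊓ hermDual n e (K ∙ w) = ⊥ := by
  refine (Submodule.eq_bot_iff _).2 fun u ⟨hu, hu_dual⟩ => ?_
  obtain ⟨a, rfl⟩ := Submodule.mem_span_singleton.1 hu
  have h := mem_hermDual.1 hu_dual w (Submodule.mem_span_singleton_self w)
  simp only [Pi.smul_apply, smul_eq_mul, mul_left_comm _ a, ← Finset.mul_sum] at h
  simp [(mul_eq_zero.1 h).resolve_right hw]

end HermitianHull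

section Frobenius

variable {K : Type*} [Field K] {p : ℕ} [Fact p.Prime] [Algebra (ZMod p) K]

lemma exists_hermNorm_add_mul_ne_zero (hp : p ≠ 2) (m : ℕ) {x y : K}
    (hxy : x ^ p ^ m * x + y ^ p ^ m * y = 0) (hy : y ≠ 0) :
    ∃ s : ZMod p, (x + algebraMap (ZMod p) K s * y) ^ p ^ m * (x + algebraMap (ZMod p) K s * y)
      + y ^ p ^ m * y ≠ 0 := by
  have := charP_of_injective_algebraMap (algebraMap (ZMod p) K).injective p
  set q := p ^ m
  have expand (s : ZMod p) : (x + algebraMap (ZMod p) K s * y) ^ q *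
      (x + algebraMap (ZMod p) K s * y) + y ^ q * y = algebraMap (ZMod p) K s *
      (x ^ q * y + x * y ^ q) + algebraMap (ZMod p) K s ^ 2 * (y ^ q * y) := by
    rw [add_pow_char_pow, mul_pow, ← map_pow, ZMod.pow_card_pow]
    linear_combination hxy
  have hB : y ^ q * y ≠ 0 := mul_ne_zero (pow_ne_zero q hy) hy
  by_cases hAB : x ^ q * y + x * y ^ q + y ^ q * y = 0
  · refine ⟨-1, ?_⟩
    have two_ne_zero : (2 : K) ≠ 0 := Ring.two_ne_zero (by rwa [ringChar.eq K p])
    rw [expand, map_neg, map_one]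
    intro h
    exact mul_ne_zero two_ne_zero hB (by linear_combination h + hAB)
  · exact ⟨1, by rwa [expand, map_one, one_mul, one_pow, one_mul]⟩

end Frobenius

theorem stmt6_general (m : ℕ)
    (K : Type*) [Field K] [Algebra (ZMod 3) K]
    (C : Submodule K (Fin 2 → K)) (hC1 : Module.finrank K C = 1)
    (hhull : Module.finrank K ↥(C ⊓ hermDual 2 (3 ^ m) C) = 1) :
    ∃ M : Matrix (Fin 2) (Fin 2) (ZMod 3), IsUnit M ∧
      (C.map (M.map (algebraMap (ZMod 3) K)).vecMulLinear) ⊓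
        hermDual 2 (3 ^ m) (C.map (M.map (algebraMap (ZMod 3) K)).vecMulLinear) = ⊥ := by
  obtain ⟨v, hvC, hv0⟩ := Submodule.exists_mem_ne_zero_of_ne_bot
    (Submodule.one_le_finrank_iff.1 hC1.ge)
  have hCv : C = K ∙ v := eq_span_singleton_of_mem_of_finrank_eq_one hC1 hvC hv0
  have hself : C ≤ hermDual 2 (3 ^ m) C :=
    le_hermDual_of_finrank_inf_hermDual (hhull.trans hC1.symm)
  have hnorm : v 0 ^ 3 ^ m * v 0 + v 1 ^ 3 ^ m * v 1 = 0 := by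
    simpa [Fin.sum_univ_two] using mem_hermDual.1 (hself hvC) v hvC
  have hv1 : v 1 ≠ 0 := by
    intro h
    have h' : v 0 = 0 := by simpa [h] using hnorm
    exact hv0 (funext fun i => by fin_cases i <;> assumption)
  obtain ⟨s, hs⟩ := exists_hermNorm_add_mul_ne_zero (by norm_num) m hnorm hv1
  refine ⟨!![1, 0; s, 1], by simp [Matrix.isUnit_iff_isUnit_det], ?_⟩
  rw [hCv, Submodule.map_span, Set.image_singleton]
  apply span_singleton_inf_hermDual_eq_bot
  simpa [Fin.sum_univ_two, vecMul, dotProduct, mul_comm] using hs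

/-- over `K = F_{9^m}`, every 1-dimensional Hermitian self-orthogonal code
`C ⊆ K²` becomes Hermitian LCD after right multiplication by a suitable `M ∈ GL₂(F_3)`. -/
theorem stmt6 (m : ℕ) (hm : 1 ≤ m)
    (K : Type*) [Field K] [Fintype K] [Algebra (ZMod 3) K] (hK : Fintype.card K = 9 ^ m)
    (C : Submodule K (Fin 2 → K)) (hC1 : Module.finrank K C = 1)
    (hhull : Module.finrank K ↥(C ⊓ hermDual 2 (3 ^ m) C) = 1) :
    ∃ M : Matrix (Fin 2) (Fin 2) (ZMod 3), IsUnit M ∧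
      (C.map (M.map (algebraMap (ZMod 3) K)).vecMulLinear) ⊓
        hermDual 2 (3 ^ m) (C.map (M.map (algebraMap (ZMod 3) K)).vecMulLinear) = ⊥ :=
  stmt6_general m K C hC1 hhull
end

section
/- Let K = F_{2^{2m}} and let C ⊆ K^n be a k-dimensional K-linear code with n ≥ 3 whose Hermitian hull equals K·(1,…,1), the line spanned by the all-ones vector. Then there exists M ∈ GL_n(F_2) such that C·M has trivial Hermitian hull, i.e. C·M ∩ (C·M)^{⊥_H} = {0}. -/
open Matrix

/-!
With `A = [[1, 𝟙], [0, I]]` one has `x A = x + x₀ • (𝟙 - e₀)`. Because `𝟙` lies in the hull, every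
codeword has coordinate sum `0` and `n = 0` in `K`; expanding the Hermitian form then gives
`⟨x A, y A⟩_H = ⟨x, y⟩_H - 3 σ(x₀) y₀`, which is `⟨x, y⟩_H + σ(x₀) y₀` in characteristic `2`.
If `y A` lies in the hull of `C A`, testing against `x = 𝟙` gives `y₀ = 0`, so `y` lies in the
hull `K 𝟙` of `C`, and `y₀ = 0` forces `y = 0`.
-/

section UpdateRow

variable {R : Type*} [CommRing R] {n : ℕ} [NeZero n]

theorem updateRow_one_zero_eq :
    updateRow (1 : Matrix (Fin n) (Fin n) R) 0 1 =
      1 + vecMulVec (Pi.single 0 1) (1 - Pi.single 0 1) := by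
  ext i j
  by_cases hi : i = 0
  · subst hi
    by_cases hj : j = 0 <;> simp [updateRow_apply, vecMulVec_apply, one_apply, hj, eq_comm]
  · simp [updateRow_apply, vecMulVec_apply, hi, Pi.single_apply]

theorem isUnit_updateRow_one_zero : IsUnit (updateRow (1 : Matrix (Fin n) (Fin n) R) 0 1) := by
  rw [isUnit_iff_isUnit_det, det_of_isUpperTriangular]
  · simp [updateRow_apply]
  · intro i j (hji : j < i)
    have hi : i ≠ 0 := fun h => by simp [h] at hji
    simp [updateRow_apply, hi, one_apply, hji.ne']

theorem vecMul_updateRow_one_zero (x : Fin n → R) :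
    x ᵥ* updateRow (1 : Matrix (Fin n) (Fin n) R) 0 1 = x + x 0 • (1 - Pi.single 0 1) := by
  rw [updateRow_one_zero_eq, vecMul_add, vecMul_one, vecMul_vecMulVec, dotProduct_single, mul_one]

theorem vecMul_updateRow_one_zero_dotProduct {a b : Fin n → R} (ha : ∑ i, a i = 0)
    (hb : ∑ i, b i = 0) (hn : (n : R) = 0) :
    (a ᵥ* updateRow (1 : Matrix (Fin n) (Fin n) R) 0 1) ⬝ᵥ (b ᵥ* updateRow 1 0 1) =
      a ⬝ᵥ b - 3 * (a 0 * b 0) := by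
  rw [vecMul_updateRow_one_zero, vecMul_updateRow_one_zero]
  set w : Fin n → R := 1 - Pi.single 0 1
  have haw : a ⬝ᵥ w = -a 0 := by simp [w, dotProduct_sub, dotProduct_one, ha]
  have hwb : w ⬝ᵥ b = -b 0 := by simp [w, sub_dotProduct, one_dotProduct, hb]
  have hww : w ⬝ᵥ w = -1 := by simp [w, sub_dotProduct, dotProduct_sub, hn]
  simp only [add_dotProduct, dotProduct_add, smul_dotProduct, dotProduct_smul, haw, hwb, hww,
    smul_eq_mul]
  ring

end UpdateRow

theorem vecMul_map_pow_char_pow {K ι κ : Type*} [CommRing K] [Fintype ι] (p m : ℕ)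
    [Fact p.Prime] [CharP K p] (f : ZMod p →+* K) (A : Matrix ι κ (ZMod p)) (x : ι → K) :
    (x ᵥ* A.map f) ^ p ^ m = x ^ p ^ m ᵥ* A.map f := by
  ext i
  rw [Pi.pow_apply, ← iterateFrobenius_def, RingHom.map_vecMul, Matrix.map_map]
  congr 2
  funext a
  rw [Function.comp_apply, iterateFrobenius_def, ← map_pow, ZMod.pow_card_pow]

section HermitianDual

variable {K : Type*} [Field K] {n : ℕ}

theorem mem_hermDual_iff {e : ℕ} {C : Submodule K (Fin n → K)} {z : Fin n → K} :
    z ∈ hermDual n e C ↔ ∀ c ∈ C, c ^ e ⬝ᵥ z = 0 := by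
  simp [hermDual, dotProduct, LinearMap.sum_apply]

variable {p m : ℕ} [Fact p.Prime] [CharP K p]

theorem sum_eq_zero_of_one_mem_hermDual {C : Submodule K (Fin n → K)}
    (h1 : (1 : Fin n → K) ∈ hermDual n (p ^ m) C) {c : Fin n → K} (hc : c ∈ C) :
    ∑ i, c i = 0 := by
  have h := mem_hermDual_iff.1 h1 c hc
  rw [dotProduct_one] at h
  simp only [Pi.pow_apply, ← sum_pow_char_pow] at h
  exact (pow_eq_zero_iff (expChar_pow_pos K p m).ne').1 h

theorem pow_vecMul_updateRow_one_zero_dotProduct [NeZero n] (f : ZMod p →+* K)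
    (hn : (n : K) = 0) {x y : Fin n → K} (hx : ∑ i, x i = 0) (hy : ∑ i, y i = 0) :
    (x ᵥ* (updateRow (1 : Matrix (Fin n) (Fin n) (ZMod p)) 0 1).map f) ^ p ^ m ⬝ᵥ
        (y ᵥ* (updateRow 1 0 1).map f) =
      x ^ p ^ m ⬝ᵥ y - 3 * (x 0 ^ p ^ m * y 0) := by
  have hA : (updateRow (1 : Matrix (Fin n) (Fin n) (ZMod p)) 0 1).map f = updateRow 1 0 1 := by
    rw [map_updateRow, Matrix.map_one f f.map_zero f.map_one]
    exact congrArg _ (funext fun _ => f.map_one)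
  have hxq : ∑ i, (x ^ p ^ m) i = 0 := by
    simp only [Pi.pow_apply, ← sum_pow_char_pow, hx, zero_pow (expChar_pow_pos K p m).ne']
  rw [vecMul_map_pow_char_pow, hA, vecMul_updateRow_one_zero_dotProduct hxq hy hn, Pi.pow_apply]

end HermitianDual

theorem stmt8_general (m n : ℕ) (hn : 3 ≤ n)
    (K : Type*) [Field K] [Algebra (ZMod 2) K]
    (C : Submodule K (Fin n → K))
    (hhull : C ⊓ hermDual n (2 ^ m) C = Submodule.span K {(fun _ => 1 : Fin n → K)}) :
    ∃ M : Matrix (Fin n) (Fin n) (ZMod 2), IsUnit M ∧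
      (C.map (M.map (algebraMap (ZMod 2) K)).vecMulLinear) ⊓
        hermDual n (2 ^ m) (C.map (M.map (algebraMap (ZMod 2) K)).vecMulLinear) = ⊥ := by
  have : NeZero n := ⟨by omega⟩
  have : CharP K 2 := charP_of_injective_ringHom (algebraMap (ZMod 2) K).injective 2
  have h1 : (1 : Fin n → K) ∈ C ⊓ hermDual n (2 ^ m) C :=
    hhull ▸ Submodule.mem_span_singleton_self _
  have hsum : ∀ c ∈ C, ∑ i, c i = 0 := fun c hc => sum_eq_zero_of_one_mem_hermDual h1.2 hc
  have hn0 : (n : K) = 0 := by simpa using hsum 1 h1.1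
  refine ⟨updateRow 1 0 1, isUnit_updateRow_one_zero, eq_bot_iff.2 ?_⟩
  rintro _ ⟨⟨y, hy, rfl⟩, hdual⟩
  have hform : ∀ x ∈ C, x ^ 2 ^ m ⬝ᵥ y = 3 * (x 0 ^ 2 ^ m * y 0) := fun x hx => by
    have h := mem_hermDual_iff.1 hdual _ ⟨x, hx, rfl⟩
    simpa only [vecMulLinear_apply, sub_eq_zero,
      pow_vecMul_updateRow_one_zero_dotProduct _ hn0 (hsum x hx) (hsum y hy)] using h
  have h3 : (3 : K) = 1 := by linear_combination CharTwo.two_eq_zero (R := K)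
  have hy0 : y 0 = 0 := by simpa [one_dotProduct, hsum y hy, h3, eq_comm] using hform 1 h1.1
  have hyhull : y ∈ C ⊓ hermDual n (2 ^ m) C :=
    ⟨hy, mem_hermDual_iff.2 fun x hx => by rw [hform x hx, hy0, mul_zero, mul_zero]⟩
  rw [hhull] at hyhull
  obtain ⟨a, rfl⟩ := Submodule.mem_span_singleton.1 hyhull
  obtain rfl : a = 0 := by simpa using hy0
  simp

/-- over `K = F_{2^{2m}}`, if the Hermitian hull of `C ⊆ K^n` (`n ≥ 3`) is the
line spanned by the all-ones vector, then some `M ∈ GL_n(F_2)` makes `C·M` Hermitian LCD. -/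
theorem stmt8 (m n : ℕ) (hm : 1 ≤ m) (hn : 3 ≤ n)
    (K : Type*) [Field K] [Fintype K] [Algebra (ZMod 2) K]
    (hK : Fintype.card K = 2 ^ (2 * m))
    (C : Submodule K (Fin n → K))
    (hhull : C ⊓ hermDual n (2 ^ m) C = Submodule.span K {(fun _ => 1 : Fin n → K)}) :
    ∃ M : Matrix (Fin n) (Fin n) (ZMod 2), IsUnit M ∧
      (C.map (M.map (algebraMap (ZMod 2) K)).vecMulLinear) ⊓
        hermDual n (2 ^ m) (C.map (M.map (algebraMap (ZMod 2) K)).vecMulLinear) = ⊥ :=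
  stmt8_general m n hn K C hhull
end

section
/- Let K = F_4 = F_2(ω) with ω² + ω + 1 = 0, and let C = K·(1, ω) ⊆ K². Then H(C) = C (so dim_K H(C) = 1), and for every M ∈ GL_2(F_2), the code C·M also has Hermitian hull of dimension 1. In particular C is not equivalent to any Hermitian LCD code: hull-variation fails for (q,n) = (2,2). -/
open Matrix

/-!
Over `F_4` with `σ(x) = x²`, the Hermitian norm of a vector is `∑ xᵢ³`, and every nonzero
element of `F_4` has cube `1`. So a vector of `K²` with both coordinates nonzero has norm
`1 + 1 = 0`, and the line it spans is contained in its Hermitian dual: the line is its own hull.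
For `v = (1, ω)` and `M ∈ GL₂(F_2)`, the coordinates of `vM` are `a + cω` with `(a, c)` a nonzero
column of `M`; these are nonzero because `ω ∉ F_2`. Hence every `C·M` is again such a line.
-/

section HermitianHull

variable {K : Type*} [Field K] {n : ℕ}

theorem span_singleton_le_hermDual (e : ℕ) {v : Fin n → K} (hv : ∑ i, v i ^ (e + 1) = 0) :
    Submodule.span K {v} ≤ hermDual n e (Submodule.span K {v}) := by
  intro x hx
  obtain ⟨b, rfl⟩ := Submodule.mem_span_singleton.mp hx
  simp only [hermDual, Submodule.mem_iInf, LinearMap.mem_ker]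
  intro c hc
  obtain ⟨a, rfl⟩ := Submodule.mem_span_singleton.mp hc
  simp only [LinearMap.sum_apply, LinearMap.smul_apply, LinearMap.proj_apply, Pi.smul_apply,
    smul_eq_mul]
  calc ∑ i, (a * v i) ^ e * (b * v i) = a ^ e * b * ∑ i, v i ^ (e + 1) := by
        rw [Finset.mul_sum]; congr 1 with i; ring
    _ = 0 := by rw [hv, mul_zero]

theorem span_singleton_inf_hermDual (e : ℕ) {v : Fin n → K} (hv : ∑ i, v i ^ (e + 1) = 0) :
    Submodule.span K {v} ⊓ hermDual n e (Submodule.span K {v}) = Submodule.span K {v} :=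
  inf_eq_left.mpr (span_singleton_le_hermDual e hv)

theorem finrank_span_singleton_inf_hermDual (e : ℕ) {v : Fin n → K} (hv0 : v ≠ 0)
    (hv : ∑ i, v i ^ (e + 1) = 0) :
    Module.finrank K ↥(Submodule.span K {v} ⊓ hermDual n e (Submodule.span K {v})) = 1 := by
  rw [span_singleton_inf_hermDual e hv, finrank_span_singleton hv0]

end HermitianHull

theorem sum_pow_three_eq_zero_of_card_eq_four {K : Type*} [Field K] [Fintype K]
    (hK : Fintype.card K = 4) (h2 : (2 : K) = 0) {v : Fin 2 → K} (hv : ∀ i, v i ≠ 0) :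
    ∑ i, v i ^ (2 + 1) = 0 := by
  have hcube (x : K) (hx : x ≠ 0) : x ^ (2 + 1) = 1 := by
    simpa [hK] using FiniteField.pow_card_sub_one_eq_one x hx
  rw [Fin.sum_univ_two, hcube _ (hv 0), hcube _ (hv 1), one_add_one_eq_two, h2]

theorem algebraMap_add_mul_eq_zero {F K : Type*} [Field F] [Field K] [Algebra F K] {ω : K}
    (hω : ω ∉ (algebraMap F K).range) {a b : F} (h : algebraMap F K a + algebraMap F K b * ω = 0) :
    a = 0 ∧ b = 0 := by
  have hb : b = 0 := by
    by_contra hb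
    refine hω ⟨-a / b, ?_⟩
    rw [map_div₀, map_neg, div_eq_iff ((map_ne_zero _).mpr hb)]
    linear_combination -h
  subst hb
  simpa using h

theorem vecMul_map_algebraMap_ne_zero {F K : Type*} [Field F] [Field K] [Algebra F K] {ω : K}
    (hω : ω ∉ (algebraMap F K).range) {M : Matrix (Fin 2) (Fin 2) F} (hM : IsUnit M) (j : Fin 2) :
    (![1, ω] ᵥ* M.map (algebraMap F K)) j ≠ 0 := by
  intro h
  have hcol : M 0 j = 0 ∧ M 1 j = 0 := by
    refine algebraMap_add_mul_eq_zero hω ?_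
    simpa [vecMul, dotProduct, Fin.sum_univ_two, mul_comm] using h
  refine (isUnit_iff_isUnit_det M).mp hM |>.ne_zero (det_eq_zero_of_column_eq_zero j ?_)
  intro i
  fin_cases i
  exacts [hcol.1, hcol.2]

theorem not_mem_range_algebraMap_zmod_two {K : Type*} [Field K] [Algebra (ZMod 2) K] {ω : K}
    (hω : ω ^ 2 + ω + 1 = 0) : ω ∉ (algebraMap (ZMod 2) K).range := by
  rintro ⟨a, rfl⟩
  rw [← map_pow, ← map_add, ← map_one (algebraMap (ZMod 2) K), ← map_add,
    map_eq_zero_iff _ (algebraMap (ZMod 2) K).injective] at hω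
  revert a
  decide

/-- over `K = F_4 = F_2(ω)`, the code `C = K·(1,ω) ⊆ K²` equals its Hermitian
hull (which has dimension 1), and every equivalent code `C·M`, `M ∈ GL₂(F_2)`, still has
Hermitian hull of dimension 1; so hull-variation fails for `(q,n) = (2,2)`. -/
theorem stmt11 (K : Type*) [Field K] [Fintype K] [Algebra (ZMod 2) K]
    (hK : Fintype.card K = 4) (ω : K) (hω : ω ^ 2 + ω + 1 = 0)
    (C : Submodule K (Fin 2 → K)) (hC : C = Submodule.span K {![1, ω]}) :
    C ⊓ hermDual 2 2 C = C ∧ Module.finrank K ↥(C ⊓ hermDual 2 2 C) = 1 ∧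
    ∀ M : Matrix (Fin 2) (Fin 2) (ZMod 2), IsUnit M →
      Module.finrank K
        ↥((C.map (M.map (algebraMap (ZMod 2) K)).vecMulLinear) ⊓
          hermDual 2 2 (C.map (M.map (algebraMap (ZMod 2) K)).vecMulLinear)) = 1 := by
  subst hC
  have h2 : (2 : K) = 0 := by
    rw [← map_ofNat (algebraMap (ZMod 2) K) 2, show (OfNat.ofNat 2 : ZMod 2) = 0 from rfl, map_zero]
  have hω0 : ω ≠ 0 := by
    rintro rfl
    simp at hω
  have hv : ∑ i, (![1, ω] : Fin 2 → K) i ^ (2 + 1) = 0 :=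
    sum_pow_three_eq_zero_of_card_eq_four hK h2 (by simp [Fin.forall_fin_two, hω0])
  have hv0 : (![1, ω] : Fin 2 → K) ≠ 0 := fun h => one_ne_zero (congrFun h 0)
  refine ⟨span_singleton_inf_hermDual 2 hv, finrank_span_singleton_inf_hermDual 2 hv0 hv, ?_⟩
  intro M hM
  have hcoord := vecMul_map_algebraMap_ne_zero (not_mem_range_algebraMap_zmod_two hω) hM
  rw [Submodule.map_span, Set.image_singleton, vecMulLinear_apply]
  exact finrank_span_singleton_inf_hermDual 2 (fun h => hcoord 0 (congrFun h 0))
    (sum_pow_three_eq_zero_of_card_eq_four hK h2 hcoord)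
end
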